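/- arXiv:1905.07740 — 5 statements merged into one kernel-verified Lean document; each statement's English description precedes it below -/
import Mathlib

section
/- Let Γ act minimally on a Cantor space 𝔛 and let U ⊆ 𝔛 be a nonempty clopen adapted set. Then the stabilizer subgroup Γ_U = {g ∈ Γ | g·U ∩ U ≠ ∅} has finite index in Γ, and the translates {g·U | g ∈ Γ} form a finite partition of 𝔛 into clopen sets in bijection with the coset space Γ/Γ_U. -/
/-!
Minimality makes every orbit meet the nonempty open set `U`, so the translates of `U` cover
`𝔛`; adaptedness makes two translates that meet coincide. Hence the translates partition `𝔛`
into open sets, compactness leaves only finitely many of them, and the orbit of `U` is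
identified with `Γ ⧸ Γ_U` by the orbit–stabilizer bijection.
-/

open Pointwise

namespace MulAction

variable {G X : Type*} [Group G] [MulAction G X]

variable (G) in
def IsAdapted (U : Set X) : Prop :=
  ∀ g : G, (g • U ∩ U).Nonempty → g • U = U

theorem IsAdapted.smul_set_eq_of_inter_nonempty {U : Set X} (hU : IsAdapted G U) {g h : G}
    (hgh : (g • U ∩ h • U).Nonempty) : g • U = h • U := by
  have hmeet : ((h⁻¹ * g) • U ∩ U).Nonempty := by
    have := hgh.smul_set (a := h⁻¹)
    rwa [Set.smul_set_inter, smul_smul, inv_smul_smul] at this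
  calc g • U = h • (h⁻¹ * g) • U := by rw [smul_smul, mul_inv_cancel_left]
    _ = h • U := by rw [hU _ hmeet]

theorem IsAdapted.existsUnique_mem_smul_set {U : Set X} (hU : IsAdapted G U) {x : X}
    (hx : ∃ g : G, x ∈ g • U) : ∃! V : Set X, (∃ g : G, V = g • U) ∧ x ∈ V := by
  obtain ⟨g, hxg⟩ := hx
  refine ⟨g • U, ⟨⟨g, rfl⟩, hxg⟩, ?_⟩
  rintro _ ⟨⟨h, rfl⟩, hxh⟩
  exact hU.smul_set_eq_of_inter_nonempty ⟨x, hxh, hxg⟩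

theorem setOf_exists_eq_smul_set (U : Set X) :
    {V : Set X | ∃ g : G, V = g • U} = orbit G U := by
  ext V
  simp [mem_orbit_iff, eq_comm]

variable [TopologicalSpace X]

theorem exists_mem_smul_set_of_dense_orbit (hmin : ∀ x : X, Dense (orbit G x)) {U : Set X}
    (hUo : IsOpen U) (hUne : U.Nonempty) (x : X) : ∃ g : G, x ∈ g • U := by
  obtain ⟨_, ⟨g, rfl⟩, hgx⟩ := (hmin x).exists_mem_open hUo hUne
  exact ⟨g⁻¹, Set.mem_smul_set_iff_inv_smul_mem.2 (by simpa using hgx)⟩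

/-- Any translate meets a member of a finite subcover, hence equals it. -/
theorem IsAdapted.finite_orbit [CompactSpace X] [ContinuousConstSMul G X] {U : Set X}
    (hU : IsAdapted G U) (hUo : IsOpen U) (hUne : U.Nonempty)
    (hcover : ∀ x : X, ∃ g : G, x ∈ g • U) : (orbit G U).Finite := by
  obtain ⟨s, hs⟩ := isCompact_univ.elim_finite_subcover (fun g : G ↦ g • U)
    (fun g ↦ hUo.smul g) (fun x _ ↦ Set.mem_iUnion.2 (hcover x))
  refine (s.finite_toSet.image (· • U)).subset ?_
  rintro _ ⟨g, rfl⟩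
  obtain ⟨x, hx⟩ := hUne.smul_set (a := g)
  obtain ⟨h, hh, hxh⟩ := Set.mem_iUnion₂.1 (hs (Set.mem_univ x))
  exact ⟨h, hh, hU.smul_set_eq_of_inter_nonempty ⟨x, hxh, hx⟩⟩

end MulAction

open MulAction in
theorem stmt1_general {X : Type*} [MetricSpace X] [CompactSpace X]
    {G : Type*} [Group G] [MulAction G X]
    (hc : ∀ g : G, Continuous fun x : X => g • x)
    (hmin : ∀ x : X, Dense (MulAction.orbit G x))
    (U : Set X) (hne : U.Nonempty) (hcl : IsClopen U)
    (hadapt : ∀ g : G, ((g • U) ∩ U).Nonempty → g • U = U) :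
    (MulAction.stabilizer G U).FiniteIndex ∧
    (∀ g : G, IsClopen (g • U)) ∧
    (∀ x : X, ∃! V : Set X, (∃ g : G, V = g • U) ∧ x ∈ V) ∧
    {V : Set X | ∃ g : G, V = g • U}.Finite ∧
    Nonempty ({V : Set X | ∃ g : G, V = g • U} ≃ (G ⧸ MulAction.stabilizer G U)) := by
  have : ContinuousConstSMul G X := ⟨hc⟩
  have hadapt : IsAdapted G U := hadapt
  have hcover := exists_mem_smul_set_of_dense_orbit hmin hcl.isOpen hne
  have hfin : (orbit G U).Finite := hadapt.finite_orbit hcl.isOpen hne hcover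
  have : Finite (orbit G U) := hfin.to_subtype
  rw [setOf_exists_eq_smul_set]
  exact ⟨Subgroup.finiteIndex_iff_finite_quotient.2
      (Finite.of_equiv _ (orbitEquivQuotientStabilizer G U)),
    fun g ↦ ⟨hcl.isClosed.smul g, hcl.isOpen.smul g⟩,
    fun x ↦ hadapt.existsUnique_mem_smul_set (hcover x), hfin,
    ⟨orbitEquivQuotientStabilizer G U⟩⟩

theorem stmt1 {X : Type*} [MetricSpace X] [CompactSpace X]
    [TotallyDisconnectedSpace X] (hperf : Perfect (Set.univ : Set X))
    {G : Type*} [Group G] [MulAction G X]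
    (hc : ∀ g : G, Continuous fun x : X => g • x)
    (hmin : ∀ x : X, Dense (MulAction.orbit G x))
    (U : Set X) (hne : U.Nonempty) (hcl : IsClopen U)
    (hadapt : ∀ g : G, ((g • U) ∩ U).Nonempty → g • U = U) :
    (MulAction.stabilizer G U).FiniteIndex ∧
    (∀ g : G, IsClopen (g • U)) ∧
    (∀ x : X, ∃! V : Set X, (∃ g : G, V = g • U) ∧ x ∈ V) ∧
    {V : Set X | ∃ g : G, V = g • U}.Finite ∧
    Nonempty ({V : Set X | ∃ g : G, V = g • U} ≃ (G ⧸ MulAction.stabilizer G U)) :=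
  stmt1_general hc hmin U hne hcl hadapt
end

section
/- Let Γ act minimally on a Cantor space 𝔛, and let V ⊊ U be a proper inclusion of nonempty clopen sets both adapted to the action. Then the inclusion of stabilizer subgroups Γ_V ⊆ Γ_U is also proper. -/
open Pointwise

theorem stmt2 {X : Type*} [MetricSpace X] [CompactSpace X]
    [TotallyDisconnectedSpace X] (hperf : Perfect (Set.univ : Set X))
    {G : Type*} [Group G] [MulAction G X]
    (hc : ∀ g : G, Continuous fun x : X => g • x)
    (hmin : ∀ x : X, Dense (MulAction.orbit G x))
    (U V : Set X) (hneU : U.Nonempty) (hclU : IsClopen U)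
    (hneV : V.Nonempty) (hclV : IsClopen V)
    (hadaptU : ∀ g : G, ((g • U) ∩ U).Nonempty → g • U = U)
    (hadaptV : ∀ g : G, ((g • V) ∩ V).Nonempty → g • V = V)
    (hVU : V ⊂ U) :
    MulAction.stabilizer G V < MulAction.stabilizer G U := by
  constructor
  · intro g hg
    simp only [SetLike.mem_coe, MulAction.mem_stabilizer_iff] at hg ⊢
    apply hadaptU
    obtain ⟨v, hv⟩ := hneV
    exact ⟨v, Set.smul_set_mono hVU.1 (hg.symm ▸ hv), hVU.1 hv⟩
  · intro hsub
    obtain ⟨x, hxU, hxV⟩ := Set.exists_of_ssubset hVU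
    obtain ⟨y, hy, hyV⟩ := (hmin x).exists_mem_open hclV.isOpen hneV
    obtain ⟨g, rfl⟩ := hy
    have hgU : g • U = U := hadaptU g ⟨g • x, Set.smul_mem_smul_set hxU, hVU.1 hyV⟩
    have : g ∈ MulAction.stabilizer G V := hsub (by exact hgU)
    rw [MulAction.mem_stabilizer_iff] at this
    apply hxV
    rw [← this] at hyV
    rwa [Set.smul_mem_smul_set_iff] at hyV
end

section
/- A minimal action Φ of a group Γ on a Cantor metric space 𝔛 is equicontinuous if and only if for every clopen subset U ⊆ 𝔛, the orbit {Φ(g)(U) | g ∈ Γ} of U under the induced action on the collection of clopen subsets of 𝔛 is finite. -/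
/-!
A clopen set `S` of a compact metric space has a positive gap: `thickening δ S ⊆ S` for some
`δ > 0`. For fixed `δ` only finitely many sets have this property, since each is the
`δ`-thickening of its trace on a finite `δ`-net. Equicontinuity gives the whole orbit of a
clopen `U` a common gap, hence finiteness. Conversely, cover `X` by finitely many clopen sets of
diameter `< ε`; their orbits form a finite family of clopen sets with a common gap `δ`, and if
`dist x y < δ` and `g • x ∈ V`, then `y` lies in `g⁻¹ • V` together with `x`, so `g • y ∈ V`.
-/

open Pointwise Metric Set Filter Topology

section Thickening

variable {X : Type*} [PseudoMetricSpace X]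

theorem IsClopen.eventually_thickening_subset_self [CompactSpace X] {S : Set X}
    (hS : IsClopen S) : ∀ᶠ δ in 𝓝[>] 0, thickening δ S ⊆ S := by
  obtain ⟨δ, hδ, hsub⟩ := hS.isClosed.isCompact.exists_thickening_subset_open hS.isOpen le_rfl
  filter_upwards [Ioo_mem_nhdsGT hδ] with δ' hδ'
  exact (thickening_mono hδ'.2.le S).trans hsub

theorem Set.Finite.exists_thickening_subset_self [CompactSpace X] {𝒮 : Set (Set X)}
    (h𝒮 : 𝒮.Finite) (hcl : ∀ S ∈ 𝒮, IsClopen S) : ∃ δ > 0, ∀ S ∈ 𝒮, thickening δ S ⊆ S :=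
  ((h𝒮.eventually_all.2 fun S hS => (hcl S hS).eventually_thickening_subset_self).and
    self_mem_nhdsWithin).exists.imp fun _ h => ⟨h.2, h.1⟩

theorem TotallyBounded.finite_setOf_thickening_subset_self (hX : TotallyBounded (univ : Set X))
    {δ : ℝ} (hδ : 0 < δ) : {S : Set X | thickening δ S ⊆ S}.Finite := by
  obtain ⟨F, hF, hcover⟩ := Metric.totallyBounded_iff.1 hX δ hδ
  refine (hF.finite_subsets.image (thickening δ)).subset fun S hS => ⟨F ∩ S, inter_subset_left, ?_⟩
  refine ((thickening_subset_of_subset δ inter_subset_right).trans hS).antisymm fun x hx => ?_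
  obtain ⟨p, hpF, hxp⟩ := mem_iUnion₂.1 (hcover (mem_univ x))
  have hpS : p ∈ S := hS (mem_thickening_iff.2 ⟨x, hx, by rw [dist_comm]; exact hxp⟩)
  exact mem_thickening_iff.2 ⟨p, ⟨hpF, hpS⟩, hxp⟩

theorem thickening_preimage_subset {Y : Type*} [PseudoMetricSpace Y] {f : X → Y} {δ ε : ℝ}
    (hf : ∀ x y, dist x y < δ → dist (f x) (f y) < ε) (U : Set Y) :
    thickening δ (f ⁻¹' U) ⊆ f ⁻¹' thickening ε U := fun x hx => by
  obtain ⟨z, hz, hxz⟩ := mem_thickening_iff.1 hx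
  exact mem_thickening_iff.2 ⟨f z, hz, hf x z hxz⟩

end Thickening

theorem exists_finite_isClopen_cover_dist_lt {X : Type*} [MetricSpace X] [CompactSpace X]
    [TotallyDisconnectedSpace X] {ε : ℝ} (hε : 0 < ε) :
    ∃ 𝒱 : Set (Set X), 𝒱.Finite ∧ (∀ V ∈ 𝒱, IsClopen V) ∧
      (∀ V ∈ 𝒱, ∀ x ∈ V, ∀ y ∈ V, dist x y < ε) ∧ ∀ x, ∃ V ∈ 𝒱, x ∈ V := by
  choose V hVcl hxV hVball using fun x : X =>
    compact_exists_isClopen_in_isOpen (isOpen_ball (x := x)) (mem_ball_self (half_pos hε))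
  obtain ⟨t, ht⟩ := isCompact_univ.elim_finite_subcover V (fun x => (hVcl x).isOpen)
    fun x _ => mem_iUnion.2 ⟨x, hxV x⟩
  refine ⟨V '' t, t.finite_toSet.image V, forall_mem_image.2 fun p _ => hVcl p,
    forall_mem_image.2 fun p _ x hx y hy => ?_, fun x => ?_⟩
  · calc dist x y ≤ dist x p + dist y p := dist_triangle_right x y p
      _ < ε / 2 + ε / 2 := add_lt_add (hVball p hx) (hVball p hy)
      _ = ε := add_halves ε
  · obtain ⟨p, hp, hx⟩ := mem_iUnion₂.1 (ht (mem_univ x))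
    exact ⟨V p, mem_image_of_mem V hp, hx⟩

namespace MulAction

variable {X G : Type*} [Group G] [MulAction G X]

theorem finite_orbit_of_uniformEquicontinuous [PseudoMetricSpace X] [CompactSpace X]
    (h : UniformEquicontinuous fun g : G => (g • · : X → X)) {U : Set X} (hU : IsClopen U) :
    (orbit G U).Finite := by
  obtain ⟨ε, hε, hU⟩ := hU.isClosed.isCompact.exists_thickening_subset_open hU.isOpen le_rfl
  obtain ⟨δ, hδ, hequi⟩ := Metric.uniformEquicontinuous_iff.1 h ε hε
  refine (isCompact_univ.totallyBounded.finite_setOf_thickening_subset_self hδ).subset ?_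
  rintro _ ⟨g, rfl⟩
  change thickening δ (g • U) ⊆ g • U
  rw [← preimage_smul_inv]
  exact (thickening_preimage_subset (fun x y hxy => hequi x y hxy g⁻¹) U).trans
    (preimage_mono hU)

theorem uniformEquicontinuous_of_finite_orbit [MetricSpace X] [CompactSpace X]
    [TotallyDisconnectedSpace X] [ContinuousConstSMul G X]
    (hfin : ∀ U : Set X, IsClopen U → (orbit G U).Finite) :
    UniformEquicontinuous fun g : G => (g • · : X → X) := by
  refine Metric.uniformEquicontinuous_iff.2 fun ε hε => ?_
  obtain ⟨𝒱, h𝒱, hcl, hsmall, hcover⟩ := exists_finite_isClopen_cover_dist_lt (X := X) hε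
  let 𝒮 : Set (Set X) := ⋃ V ∈ 𝒱, orbit G V
  have h𝒮 : 𝒮.Finite := h𝒱.biUnion fun V hV => hfin V (hcl V hV)
  have h𝒮cl : ∀ S ∈ 𝒮, IsClopen S := by
    simp only [𝒮, mem_iUnion₂]
    rintro _ ⟨V, hV, g, rfl⟩
    exact ⟨(hcl V hV).isClosed.smul g, (hcl V hV).isOpen.smul g⟩
  obtain ⟨δ, hδ, hthick⟩ := h𝒮.exists_thickening_subset_self h𝒮cl
  refine ⟨δ, hδ, fun x y hxy g => ?_⟩
  obtain ⟨V, hV, hgx⟩ := hcover (g • x)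
  have hx : x ∈ g⁻¹ • V := mem_inv_smul_set_iff.2 hgx
  have hy : y ∈ g⁻¹ • V := hthick _ (mem_biUnion hV (mem_orbit V g⁻¹))
    (mem_thickening_iff.2 ⟨x, hx, dist_comm x y ▸ hxy⟩)
  exact hsmall V hV _ hgx _ (mem_inv_smul_set_iff.1 hy)

end MulAction

theorem stmt3_general {X : Type*} [MetricSpace X] [CompactSpace X]
    [TotallyDisconnectedSpace X]
    {G : Type*} [Group G] [MulAction G X]
    (hc : ∀ g : G, Continuous fun x : X => g • x) :
    (∀ ε > (0 : ℝ), ∃ δ > (0 : ℝ), ∀ x y : X, dist x y < δ →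
        ∀ g : G, dist (g • x) (g • y) < ε) ↔
      ∀ U : Set X, IsClopen U → (MulAction.orbit G U).Finite := by
  have : ContinuousConstSMul G X := ⟨hc⟩
  rw [← Metric.uniformEquicontinuous_iff]
  exact ⟨fun h U hU => MulAction.finite_orbit_of_uniformEquicontinuous h hU,
    MulAction.uniformEquicontinuous_of_finite_orbit⟩

theorem stmt3 {X : Type*} [MetricSpace X] [CompactSpace X]
    [TotallyDisconnectedSpace X] (hperf : Perfect (Set.univ : Set X))
    {G : Type*} [Group G] [MulAction G X]
    (hc : ∀ g : G, Continuous fun x : X => g • x)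
    (hmin : ∀ x : X, Dense (MulAction.orbit G x)) :
    (∀ ε > (0 : ℝ), ∃ δ > (0 : ℝ), ∀ x y : X, dist x y < δ →
        ∀ g : G, dist (g • x) (g • y) < ε) ↔
      ∀ U : Set X, IsClopen U → (MulAction.orbit G U).Finite :=
  stmt3_general hc
end

section
/- Let Γ act minimally and equicontinuously on a Cantor space 𝔛. Then for every x ∈ 𝔛 and every clopen set W containing x, there exists a clopen set U adapted to the action with x ∈ U ⊆ W. In particular, the adapted sets containing x form a neighborhood basis at x. -/
/-!
Fix `ε > 0` so small that `W` contains the `ε`-thickening of itself, and call `y, z` close when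
`dist (g • y) (g • z) < ε` for every `g`. The classes of the equivalence relation generated by
closeness are permuted by `G`, so each class is adapted; the class of `x` stays inside `W`; and by
equicontinuity every class contains a ball around each of its points, hence is clopen.
-/

open Pointwise Relation

section AdaptedClass

variable {G X : Type*} [Group G] [MulAction G X] {r : X → X → Prop}

theorem smul_setOf_rel (hinv : ∀ (g : G) {a b : X}, r a b → r (g • a) (g • b))
    (g : G) (x : X) : g • {y | r x y} = {y | r (g • x) y} := by
  ext w
  rw [Set.mem_smul_set_iff_inv_smul_mem]
  change r x (g⁻¹ • w) ↔ r (g • x) w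
  constructor
  · intro h
    simpa using hinv g h
  · intro h
    simpa using hinv g⁻¹ h

theorem smul_setOf_rel_eq_of_nonempty (hr : Equivalence r)
    (hinv : ∀ (g : G) {a b : X}, r a b → r (g • a) (g • b)) {g : G} {x : X}
    (h : (g • {y | r x y} ∩ {y | r x y}).Nonempty) : g • {y | r x y} = {y | r x y} := by
  rw [smul_setOf_rel hinv] at h ⊢
  obtain ⟨w, hgxw, hxw⟩ := h
  have hgx : r (g • x) x := hr.trans hgxw (hr.symm hxw)
  ext y
  exact ⟨hr.trans (hr.symm hgx), hr.trans hgx⟩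

end AdaptedClass

theorem isClopen_setOf_rel {X : Type*} [TopologicalSpace X] {r : X → X → Prop} (hr : Equivalence r)
    (hnhds : ∀ y, {z | r y z} ∈ nhds y) (x : X) : IsClopen {y | r x y} := by
  refine ⟨?_, isOpen_iff_mem_nhds.mpr fun y hxy => ?_⟩
  · refine isOpen_compl_iff.mp (isOpen_iff_mem_nhds.mpr fun y hxy => ?_)
    exact Filter.mem_of_superset (hnhds y) fun z hyz hxz => hxy (hr.trans hxz (hr.symm hyz))
  · exact Filter.mem_of_superset (hnhds y) fun z hyz => hr.trans hxy hyz

theorem Relation.EqvGen.map {α β : Type*} {r : α → α → Prop} {s : β → β → Prop} (f : α → β)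
    (hf : ∀ {a b}, r a b → s (f a) (f b)) {a b : α} (h : EqvGen r a b) :
    EqvGen s (f a) (f b) := by
  induction h with
  | rel a b hab => exact .rel _ _ (hf hab)
  | refl => exact .refl _
  | symm a b _ ih => exact .symm _ _ ih
  | trans a b c _ _ hab hbc => exact .trans _ _ _ hab hbc

theorem Relation.EqvGen.mem_iff {α : Type*} {r : α → α → Prop} {W : Set α}
    (hW : ∀ {a b}, r a b → (a ∈ W ↔ b ∈ W)) {a b : α} (h : EqvGen r a b) : a ∈ W ↔ b ∈ W := by
  induction h with
  | rel a b hab => exact hW hab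
  | refl => exact Iff.rfl
  | symm a b _ ih => exact ih.symm
  | trans a b c _ _ hab hbc => exact hab.trans hbc

section OrbitClose

variable (G : Type*) {X : Type*} [Group G] [MulAction G X] [PseudoMetricSpace X]

def OrbitClose (ε : ℝ) (y z : X) : Prop :=
  ∀ g : G, dist (g • y) (g • z) < ε

variable {G}

theorem OrbitClose.smul {ε : ℝ} {y z : X} (h : OrbitClose G ε y z) (g : G) :
    OrbitClose G ε (g • y) (g • z) := fun g' => by
  simpa [mul_smul] using h (g' * g)

theorem OrbitClose.mem_iff {ε : ℝ} {W : Set X} (hW : Metric.thickening ε W ⊆ W) {y z : X}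
    (h : OrbitClose G ε y z) : y ∈ W ↔ z ∈ W := by
  have hyz : dist y z < ε := by simpa using h 1
  refine ⟨fun hy => hW ?_, fun hz => hW ?_⟩
  · exact Metric.mem_thickening_iff.mpr ⟨y, hy, by rwa [dist_comm]⟩
  · exact Metric.mem_thickening_iff.mpr ⟨z, hz, hyz⟩

theorem isClopen_setOf_eqvGen_orbitClose {ε δ : ℝ} (hδ : 0 < δ)
    (hequi : ∀ y z : X, dist y z < δ → OrbitClose G ε y z) (x : X) :
    IsClopen {y | EqvGen (OrbitClose G ε) x y} := by
  refine isClopen_setOf_rel (EqvGen.is_equivalence _) (fun y => ?_) x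
  exact Metric.mem_nhds_iff.mpr ⟨δ, hδ, fun z hz => .rel _ _ (hequi y z (Metric.mem_ball'.mp hz))⟩

end OrbitClose

theorem stmt4_general {X : Type*} [MetricSpace X] [CompactSpace X]
    {G : Type*} [Group G] [MulAction G X]
    (hequi : ∀ ε > (0 : ℝ), ∃ δ > (0 : ℝ), ∀ x y : X, dist x y < δ →
        ∀ g : G, dist (g • x) (g • y) < ε) :
    ∀ (x : X) (W : Set X), IsClopen W → x ∈ W →
      ∃ U : Set X, U.Nonempty ∧ IsClopen U ∧ x ∈ U ∧ U ⊆ W ∧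
        ∀ g : G, ((g • U) ∩ U).Nonempty → g • U = U := by
  intro x W hW hxW
  obtain ⟨ε, hε, hWε⟩ :=
    hW.isClosed.isCompact.exists_thickening_subset_open hW.isOpen subset_rfl
  obtain ⟨δ, hδ, hδε⟩ := hequi ε hε
  have hinv (g : G) {a b : X} (h : EqvGen (OrbitClose G ε) a b) :
      EqvGen (OrbitClose G ε) (g • a) (g • b) :=
    h.map (g • ·) fun hab => hab.smul g
  refine ⟨{y | EqvGen (OrbitClose G ε) x y}, ⟨x, .refl x⟩,
    isClopen_setOf_eqvGen_orbitClose hδ hδε x, .refl x, fun y hxy => ?_,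
    fun g => smul_setOf_rel_eq_of_nonempty (EqvGen.is_equivalence _) hinv⟩
  exact (hxy.mem_iff fun h => h.mem_iff hWε).mp hxW

theorem stmt4 {X : Type*} [MetricSpace X] [CompactSpace X]
    [TotallyDisconnectedSpace X] (hperf : Perfect (Set.univ : Set X))
    {G : Type*} [Group G] [MulAction G X]
    (hc : ∀ g : G, Continuous fun x : X => g • x)
    (hmin : ∀ x : X, Dense (MulAction.orbit G x))
    (hequi : ∀ ε > (0 : ℝ), ∃ δ > (0 : ℝ), ∀ x y : X, dist x y < δ →
        ∀ g : G, dist (g • x) (g • y) < ε) :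
    ∀ (x : X) (W : Set X), IsClopen W → x ∈ W →
      ∃ U : Set X, U.Nonempty ∧ IsClopen U ∧ x ∈ U ∧ U ⊆ W ∧
        ∀ g : G, ((g • U) ∩ U).Nonempty → g • U = U :=
  stmt4_general hequi
end

section
/- If Γ₁ and Γ₂ are finitely generated virtually nilpotent groups that are commensurable (i.e., they contain isomorphic subgroups of finite index), then vc(Γ₁) = vc(Γ₂). -/
noncomputable def vc (G : Type*) [Group G] : ℕ :=
  sInf {n : ℕ | ∃ (H : Subgroup G) (_ : H.FiniteIndex) (hn : Group.IsNilpotent H),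
    @Group.nilpotencyClass H _ = n}

/-!
An injective homomorphism `f : G →* G'` with finite-index image transports finite-index nilpotent
subgroups both ways: `N ↦ f(N)` preserves the class, and `N' ↦ f⁻¹(N')` embeds into `N'`, so does
not increase it. Hence the two sets of classes dominate each other and have the same infimum.
Applying this to `H₁ ↪ Γ₁`, to `e : H₁ ≃* H₂` and to `H₂ ↪ Γ₂` gives the theorem.
-/

-- `hts` makes `t` empty along with `s`, where both infima take the junk value `0`.
theorem Nat.sInf_le_sInf_of_forall_exists_le {s t : Set ℕ} (hst : ∀ a ∈ s, ∃ b ∈ t, b ≤ a)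
    (hts : ∀ b ∈ t, ∃ a ∈ s, a ≤ b) : sInf t ≤ sInf s := by
  rcases s.eq_empty_or_nonempty with rfl | hs
  · have : t = ∅ := Set.eq_empty_of_forall_notMem fun b hb ↦ by simpa using hts b hb
    simp [this]
  · obtain ⟨b, hb, hle⟩ := hst _ (Nat.sInf_mem hs)
    exact (Nat.sInf_le hb).trans hle

theorem Nat.sInf_eq_of_forall_exists_le {s t : Set ℕ} (hst : ∀ a ∈ s, ∃ b ∈ t, b ≤ a)
    (hts : ∀ b ∈ t, ∃ a ∈ s, a ≤ b) : sInf s = sInf t :=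
  le_antisymm (Nat.sInf_le_sInf_of_forall_exists_le hts hst)
    (Nat.sInf_le_sInf_of_forall_exists_le hst hts)

namespace Group

variable {G G' : Type*} [Group G] [Group G']

theorem isNilpotent_of_injective [IsNilpotent G'] {f : G →* G'} (hf : Function.Injective f) :
    IsNilpotent G :=
  (isNilpotent_congr (MonoidHom.ofInjective hf)).mpr inferInstance

theorem nilpotencyClass_le_of_injective [IsNilpotent G'] {f : G →* G'}
    (hf : Function.Injective f) : nilpotencyClass G ≤ nilpotencyClass G' :=
  (nilpotencyClass_le_of_surjective (MonoidHom.ofInjective hf).symm.toMonoidHom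
    (MonoidHom.ofInjective hf).symm.surjective).trans (Subgroup.nilpotencyClass_le _)

theorem nilpotencyClass_congr [IsNilpotent G] (e : G ≃* G') :
    nilpotencyClass G = nilpotencyClass G' :=
  have : IsNilpotent G' := (isNilpotent_congr e).mp inferInstance
  le_antisymm (nilpotencyClass_le_of_injective (f := e.toMonoidHom) e.injective)
    (nilpotencyClass_le_of_injective (f := e.symm.toMonoidHom) e.symm.injective)

end Group

section

variable {G G' : Type*} [Group G] [Group G']

theorem vc_eq_of_injective {f : G →* G'} (hf : Function.Injective f)
    (hfi : f.range.FiniteIndex) : vc G = vc G' := by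
  refine Nat.sInf_eq_of_forall_exists_le ?_ ?_
  · rintro _ ⟨N, hN, hnil, rfl⟩
    let e : N ≃* N.map f := N.equivMapOfInjective f hf
    have hNf : (N.map f).FiniteIndex := by
      constructor
      rw [N.index_map_of_injective hf]
      exact mul_ne_zero hN.index_ne_zero hfi.index_ne_zero
    exact ⟨_, ⟨N.map f, hNf, (Group.isNilpotent_congr e).mp hnil, rfl⟩,
      (Group.nilpotencyClass_congr e).ge⟩
  · rintro _ ⟨N', hN', hnil, rfl⟩
    have hinj : Function.Injective (f.subgroupComap N') :=
      fun x y h ↦ Subtype.ext (hf (congrArg Subtype.val h))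
    have hN'f : (N'.comap f).FiniteIndex :=
      ⟨by rw [Subgroup.index_comap]; exact Subgroup.FiniteIndex.index_ne_zero⟩
    exact ⟨_, ⟨N'.comap f, hN'f, Group.isNilpotent_of_injective hinj, rfl⟩,
      Group.nilpotencyClass_le_of_injective hinj⟩

theorem vc_subgroup (H : Subgroup G) [H.FiniteIndex] : vc H = vc G :=
  vc_eq_of_injective H.subtype_injective (by rwa [H.range_subtype])

theorem vc_congr (e : G ≃* G') : vc G = vc G' :=
  vc_eq_of_injective (f := e.toMonoidHom) e.injective
    (by rw [MonoidHom.range_eq_top.mpr e.surjective]; infer_instance)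

end

theorem stmt15_general (Γ₁ Γ₂ : Type*) [Group Γ₁] [Group Γ₂]
    (H₁ : Subgroup Γ₁) (H₂ : Subgroup Γ₂) (hi₁ : H₁.FiniteIndex) (hi₂ : H₂.FiniteIndex)
    (e : H₁ ≃* H₂) :
    vc Γ₁ = vc Γ₂ :=
  calc vc Γ₁ = vc H₁ := (vc_subgroup H₁).symm
    _ = vc H₂ := vc_congr e
    _ = vc Γ₂ := vc_subgroup H₂

theorem stmt15 (Γ₁ Γ₂ : Type*) [Group Γ₁] [Group Γ₂] [Group.FG Γ₁] [Group.FG Γ₂]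
    (hvn₁ : ∃ H : Subgroup Γ₁, H.FiniteIndex ∧ Group.IsNilpotent H)
    (hvn₂ : ∃ H : Subgroup Γ₂, H.FiniteIndex ∧ Group.IsNilpotent H)
    (H₁ : Subgroup Γ₁) (H₂ : Subgroup Γ₂) (hi₁ : H₁.FiniteIndex) (hi₂ : H₂.FiniteIndex)
    (e : H₁ ≃* H₂) :
    vc Γ₁ = vc Γ₂ :=
  stmt15_general Γ₁ Γ₂ H₁ H₂ hi₁ hi₂ e
end
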